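/- arXiv:2106.08100 — 2 statements merged into one kernel-verified Lean document; each statement's English description precedes it below -/
import Mathlib

section
/- Uniqueness of the β-system solution: for a given degree sequence d = (d_1,…,d_n), there is at most one β* ∈ ℝ^n satisfying ∑_{W ∋ j} λ_W(β*) = d_j for all j ∈ [n], where the sum is over r-subsets W of [n] containing j and λ_W(β) = exp(∑_{k∈W} β_k)/(1+exp(∑_{k∈W} β_k)). -/
noncomputable def lamW {n : ℕ} (β : Fin n → ℝ) (W : Finset (Fin n)) : ℝ :=
  Real.exp (∑ k ∈ W, β k) / (1 + Real.exp (∑ k ∈ W, β k))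

/-!
With `s_W(β) = ∑_{k ∈ W} β_k` and `σ` the sigmoid, so that `λ_W(β) = σ(s_W(β))`, double counting
over pairs `j ∈ W` gives
`∑_W (s_W(β) - s_W(β')) (σ(s_W(β)) - σ(s_W(β'))) = ∑_j (β_j - β'_j) (d_j - d_j) = 0`.
As `σ` is strictly increasing, every summand is nonnegative and vanishes only if
`s_W(β) = s_W(β')`. Hence `β - β'` sums to zero over every `r`-subset; for `0 < r < n`, exchanging
one element between two such subsets shows that `β - β'` is constant, hence zero.
-/

open Finset

lemma exp_div_one_add_exp_eq_sigmoid (x : ℝ) :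
    Real.exp x / (1 + Real.exp x) = Real.sigmoid x := by
  rw [Real.sigmoid_def, Real.exp_neg]
  field_simp
  ring

lemma lamW_eq_sigmoid {n : ℕ} (β : Fin n → ℝ) (W : Finset (Fin n)) :
    lamW β W = Real.sigmoid (∑ k ∈ W, β k) :=
  exp_div_one_add_exp_eq_sigmoid _

section StrictMono

variable {R : Type*} [Ring R] [LinearOrder R] [IsStrictOrderedRing R] {f : R → R}

lemma StrictMono.sub_mul_sub_pos (hf : StrictMono f) {a b : R} (hab : a ≠ b) :
    0 < (a - b) * (f a - f b) := by
  rcases hab.lt_or_gt with h | h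
  · exact mul_pos_of_neg_of_neg (sub_neg.2 h) (sub_neg.2 (hf h))
  · exact mul_pos (sub_pos.2 h) (sub_pos.2 (hf h))

lemma StrictMono.eq_of_sum_sub_mul_sub_eq_zero {ι : Type*} (hf : StrictMono f)
    {s : Finset ι} {a b : ι → R} (h : ∑ i ∈ s, (a i - b i) * (f (a i) - f (b i)) = 0) :
    ∀ i ∈ s, a i = b i := by
  have hnonneg : ∀ i ∈ s, 0 ≤ (a i - b i) * (f (a i) - f (b i)) := fun i _ => by
    obtain hi | hi := eq_or_ne (a i) (b i)
    · simp [hi]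
    · exact (hf.sub_mul_sub_pos hi).le
  intro i hi
  by_contra hne
  exact (hf.sub_mul_sub_pos hne).ne' ((sum_eq_zero_iff_of_nonneg hnonneg).1 h i hi)

end StrictMono

lemma sum_sum_mul_eq_sum_mul_sum_filter_mem {ι R : Type*} [Fintype ι] [DecidableEq ι]
    [NonUnitalNonAssocSemiring R] (P : Finset (Finset ι)) (γ : ι → R) (c : Finset ι → R) :
    ∑ W ∈ P, (∑ k ∈ W, γ k) * c W = ∑ k, γ k * ∑ W ∈ P with k ∈ W, c W := by
  simp_rw [sum_mul, mul_sum]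
  exact sum_comm' fun W k => by simp [and_comm]

section PowersetCard

variable {ι M : Type*} [Fintype ι] [DecidableEq ι] [AddCommGroup M] {r : ℕ} {γ : ι → M}

lemma eq_of_forall_sum_powersetCard_eq_zero (hr : 0 < r) (hrι : r < Fintype.card ι)
    (hγ : ∀ W ∈ powersetCard r univ, ∑ k ∈ W, γ k = 0) (i j : ι) : γ i = γ j := by
  obtain rfl | hij := eq_or_ne i j
  · rfl
  have hcard : r - 1 ≤ (univ \ {i, j} : Finset ι).card := by
    rw [card_sdiff_of_subset (subset_univ _), card_pair hij, card_univ]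
    omega
  obtain ⟨A, hA, hAcard⟩ := exists_subset_card_eq hcard
  have hiA : i ∉ A := fun h => by simpa using hA h
  have hjA : j ∉ A := fun h => by simpa using hA h
  have hmem : ∀ x ∉ A, insert x A ∈ powersetCard r univ := fun x hx => by
    rw [mem_powersetCard, card_insert_of_notMem hx, hAcard]
    exact ⟨subset_univ _, by omega⟩
  have hi := hγ _ (hmem i hiA)
  have hj := hγ _ (hmem j hjA)
  rw [sum_insert hiA] at hi
  rw [sum_insert hjA] at hj
  exact add_right_cancel (hi.trans hj.symm)

lemma eq_zero_of_forall_sum_powersetCard_eq_zero [IsAddTorsionFree M] (hr : 0 < r)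
    (hrι : r < Fintype.card ι) (hγ : ∀ W ∈ powersetCard r univ, ∑ k ∈ W, γ k = 0) : γ = 0 := by
  funext j
  obtain ⟨W, hW⟩ := powersetCard_nonempty.2 (card_univ (α := ι) ▸ hrι.le)
  have hsum : ∑ k ∈ W, γ k = r • γ j := by
    rw [sum_congr rfl fun k _ => eq_of_forall_sum_powersetCard_eq_zero hr hrι hγ k j,
      sum_const, (mem_powersetCard.1 hW).2]
  exact (nsmul_eq_zero_iff_right hr.ne').1 (hsum ▸ hγ W hW)

end PowersetCard

theorem stmt13 (n r : ℕ) (hr : 2 ≤ r) (hrn : r < n) (d : Fin n → ℝ)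
    (β β' : Fin n → ℝ)
    (h : ∀ j : Fin n,
      ∑ W ∈ (Finset.powersetCard r (Finset.univ : Finset (Fin n))).filter (fun W => j ∈ W),
        lamW β W = d j)
    (h' : ∀ j : Fin n,
      ∑ W ∈ (Finset.powersetCard r (Finset.univ : Finset (Fin n))).filter (fun W => j ∈ W),
        lamW β' W = d j) :
    β = β' := by
  set P := powersetCard r (univ : Finset (Fin n))
  have hzero : ∑ W ∈ P, (∑ k ∈ W, β k - ∑ k ∈ W, β' k) * (lamW β W - lamW β' W) = 0 := by
    simp_rw [← sum_sub_distrib, sum_sum_mul_eq_sum_mul_sum_filter_mem, sum_sub_distrib, h, h',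
      sub_self, mul_zero, sum_const_zero]
  simp_rw [lamW_eq_sigmoid] at hzero
  have hsums := Real.sigmoid_strictMono.eq_of_sum_sub_mul_sub_eq_zero hzero
  have hdiff : β - β' = 0 :=
    eq_zero_of_forall_sum_powersetCard_eq_zero (by omega : 0 < r) (by simpa using hrn)
      fun W hW => by simp [sum_sub_distrib, hsums W hW]
  exact sub_eq_zero.1 hdiff
end

section
/- Symmetry under edge-complementation: suppose β* ∈ ℝ^n satisfies ∑_{W ∋ j, |W|=r} λ_W(β*) = d_j for all j. Define β′_j = (1/(n−r)) ∑_{k∈[n]} β*_k − β*_j. Then for every r-subset W, λ_{[n]∖W}(β′) = λ_W(β*), and β′ satisfies the (n−r)-uniform system ∑_{U ∋ j, |U|=n−r} λ_U(β′) = e(d) − d_j for all j, where e(d) = (1/r)∑_{k} d_k = ∑_{|W|=r} λ_W(β*). -/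
open Finset

section Complement

variable {α : Type*} [Fintype α] [DecidableEq α]

theorem sum_sum_filter_mem_powersetCard {M : Type*} [AddCommMonoid M] (r : ℕ)
    (f : Finset α → M) :
    ∑ j, ∑ W ∈ powersetCard r univ with j ∈ W, f W = r • ∑ W ∈ powersetCard r univ, f W := by
  rw [sum_comm' (t' := powersetCard r univ) (s' := id) (by simp [and_comm]), smul_sum]
  refine sum_congr rfl fun W hW => ?_
  rw [id, sum_const, (mem_powersetCard.mp hW).2]

theorem sum_powersetCard_filter_mem_eq_sum_compl {M : Type*} [AddCommMonoid M] {r : ℕ}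
    (hr : r ≤ Fintype.card α) (j : α) (g : Finset α → M) :
    ∑ U ∈ powersetCard (Fintype.card α - r) univ with j ∈ U, g U =
      ∑ W ∈ powersetCard r univ with j ∉ W, g Wᶜ := by
  refine sum_nbij' compl compl ?_ ?_ (fun U _ => compl_compl U) (fun W _ => compl_compl W)
    (fun U _ => by rw [compl_compl])
  · intro U hU
    simp only [mem_filter, mem_powersetCard, subset_univ, true_and, card_compl, mem_compl,
      not_not] at hU ⊢
    exact ⟨by omega, hU.2⟩
  · intro W hW
    simp only [mem_filter, mem_powersetCard, subset_univ, true_and, card_compl,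
      mem_compl] at hW ⊢
    exact ⟨by omega, hW.2⟩

noncomputable def complWeights (r : ℕ) (β : α → ℝ) (j : α) : ℝ :=
  (1 / ((Fintype.card α : ℝ) - r)) * ∑ k, β k - β j

theorem sum_compl_complWeights {r : ℕ} (hr : r < Fintype.card α) (β : α → ℝ) {W : Finset α}
    (hW : W.card = r) :
    ∑ k ∈ Wᶜ, complWeights r β k = ∑ k ∈ W, β k := by
  have hcard : ((Wᶜ.card : ℕ) : ℝ) = (Fintype.card α : ℝ) - r := by
    rw [card_compl, hW, Nat.cast_sub hr.le]
  have hne : (Fintype.card α : ℝ) - r ≠ 0 := by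
    rw [sub_ne_zero]; exact_mod_cast hr.ne'
  have hsplit := sum_add_sum_compl W β
  simp only [complWeights, sum_sub_distrib, sum_const, nsmul_eq_mul, hcard]
  field_simp
  linarith

end Complement

theorem lamW_eq_of_sum_eq {n : ℕ} {β β' : Fin n → ℝ} {U W : Finset (Fin n)}
    (h : ∑ k ∈ U, β' k = ∑ k ∈ W, β k) : lamW β' U = lamW β W := by
  rw [lamW, lamW, h]

theorem stmt15 (n r : ℕ) (hr : 1 ≤ r) (hrn : r ≤ n - 1) (d : Fin n → ℝ)
    (β β' : Fin n → ℝ)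
    (hβ : ∀ j : Fin n,
      ∑ W ∈ (Finset.powersetCard r (Finset.univ : Finset (Fin n))).filter (fun W => j ∈ W),
        lamW β W = d j)
    (hβ' : ∀ j : Fin n, β' j = (1 / ((n : ℝ) - r)) * (∑ k : Fin n, β k) - β j) :
    (∀ W : Finset (Fin n), W.card = r →
      lamW β' (Finset.univ \ W) = lamW β W) ∧
    (∀ j : Fin n,
      ∑ U ∈ (Finset.powersetCard (n - r) (Finset.univ : Finset (Fin n))).filter (fun U => j ∈ U),
        lamW β' U = (1 / (r : ℝ)) * (∑ k : Fin n, d k) - d j) := by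
  have hrn' : r < Fintype.card (Fin n) := by rw [Fintype.card_fin]; omega
  have hβ'_eq : β' = complWeights r β := funext fun j => by
    rw [hβ', complWeights, Fintype.card_fin]
  have hcompl : ∀ W : Finset (Fin n), W.card = r → lamW β' Wᶜ = lamW β W := fun W hW =>
    lamW_eq_of_sum_eq (hβ'_eq ▸ sum_compl_complWeights hrn' β hW)
  refine ⟨fun W hW => compl_eq_univ_sdiff W ▸ hcompl W hW, fun j => ?_⟩
  have htotal : ∑ k, d k = r * ∑ W ∈ powersetCard r univ, lamW β W := by
    simp_rw [← hβ, sum_sum_filter_mem_powersetCard, nsmul_eq_mul]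
  have hr0 : (r : ℝ) ≠ 0 := by exact_mod_cast (by omega : r ≠ 0)
  calc ∑ U ∈ powersetCard (n - r) univ with j ∈ U, lamW β' U
      = ∑ W ∈ powersetCard r univ with j ∉ W, lamW β W := by
        have h := sum_powersetCard_filter_mem_eq_sum_compl hrn'.le j (lamW β')
        rw [Fintype.card_fin] at h
        rw [h]
        exact sum_congr rfl fun W hW => hcompl W (mem_powersetCard.mp (mem_filter.mp hW).1).2
    _ = ∑ W ∈ powersetCard r univ, lamW β W - d j := by
        rw [← hβ j, eq_sub_iff_add_eq, sum_filter_not_add_sum_filter]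
    _ = 1 / r * ∑ k, d k - d j := by rw [htotal, one_div, inv_mul_cancel_left₀ hr0]
end
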